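/- Let ℏ, m > 0, α ∈ ℝ, c ∈ ℂ, and let f : ℝ³ → ℂ be C¹ in a neighborhood of the origin. Define ψ : ℝ³ \ {0} → ℂ by ψ(y) = c/|y| + f(y), and suppose ψ satisfies the Bethe–Peierls boundary condition: for every ω ∈ S², lim_{r→0} [∂_r (r ψ(rω)) + α r ψ(rω)] = 0. Then the probability current into the origin vanishes: lim_{r→0} ∫_{S²} r² j_r(rω) d²ω = 0, where j_r(y) = (ℏ/m) Im[ψ(y)* ∂_r ψ(y)]. -/

import Mathlib

/-!
Along a ray, `r ψ(rω) = c + r f(rω)`, so the Bethe–Peierls condition in a single direction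
already forces `f 0 = -α c`. With `a = f(rω)` and `b = ∂_r f(rω)` one has
`r² ψ̄ ∂_r ψ = -|c|²/r + r c̄ b - ā c + r² ā b`: the singular term is real, and
`ā c → -α |c|²` is real too, so the imaginary part tends to `0`, uniformly in `ω` because `f`
is `C¹` at the origin.
-/

open Complex MeasureTheory Metric Filter Topology ComplexConjugate

theorem tendsto_integral_zero_of_tendsto_uncurry {ι α G : Type*} [MeasurableSpace α]
    [NormedAddCommGroup G] [NormedSpace ℝ G] {l : Filter ι} {μ : Measure α} [IsFiniteMeasure μ]
    {F : ι → α → G} (hF : Tendsto (Function.uncurry F) (l ×ˢ ⊤) (𝓝 0)) :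
    Tendsto (fun i => ∫ x, F i x ∂μ) l (𝓝 0) := by
  rw [NormedAddGroup.tendsto_nhds_zero] at hF ⊢
  intro ε hε
  have hμ : 0 < μ.real Set.univ + 1 := by positivity
  filter_upwards [(hF (ε / (μ.real Set.univ + 1)) (by positivity)).curry] with i hi
  calc ‖∫ x, F i x ∂μ‖ ≤ ε / (μ.real Set.univ + 1) * μ.real Set.univ :=
        norm_integral_le_of_norm_le_const (ae_of_all _ fun x => (eventually_top.1 hi x).le)
    _ < ε := by
        rw [div_mul_eq_mul_div, div_lt_iff₀ hμ]
        nlinarith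

theorem sq_mul_im_conj_div_add_mul_neg_div_add (c a b : ℂ) {r : ℝ} (hr : r ≠ 0) :
    r ^ 2 * (conj (c / r + a) * (-c / r ^ 2 + b)).im =
      (conj c * (r * b) - conj a * c + r * conj a * (r * b)).im := by
  have hrC : (r : ℂ) ≠ 0 := ofReal_ne_zero.2 hr
  have hexpand : (r : ℂ) ^ 2 * (conj (c / r + a) * (-c / r ^ 2 + b)) =
      ((-(normSq c / r) : ℝ) : ℂ) + (conj c * (r * b) - conj a * c + r * conj a * (r * b)) := by
    push_cast
    rw [normSq_eq_conj_mul_self]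
    simp only [map_add, map_div₀, conj_ofReal]
    field_simp
    ring
  rw [← im_ofReal_mul, ofReal_pow, hexpand, add_im, ofReal_im, zero_add]

section Ray

variable {E F : Type*} [NormedAddCommGroup E] [NormedSpace ℝ E]
  [NormedAddCommGroup F] [NormedSpace ℝ F]

theorem tendsto_smul_sphere_nhds_zero {l : Filter ℝ} (hl : l ≤ 𝓝 0) :
    Tendsto (fun p : ℝ × sphere (0 : E) 1 => p.1 • (p.2 : E)) (l ×ˢ ⊤) (𝓝 0) := by
  rw [tendsto_zero_iff_norm_tendsto_zero]
  simpa [norm_smul] using ((tendsto_fst (g := ⊤)).mono_right hl).norm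

theorem ContDiffAt.eventually_differentiableAt_smul_sphere {f : E → F}
    (hf : ContDiffAt ℝ 1 f 0) :
    ∀ᶠ p : ℝ × sphere (0 : E) 1 in 𝓝[>] 0 ×ˢ ⊤,
      0 < p.1 ∧ DifferentiableAt ℝ f (p.1 • (p.2 : E)) := by
  have hdiff : ∀ᶠ y in 𝓝 (0 : E), DifferentiableAt ℝ f y :=
    (hf.eventually (by simp)).mono fun y hy => hy.differentiableAt one_ne_zero
  exact (tendsto_fst.eventually self_mem_nhdsWithin).and <|
    (tendsto_smul_sphere_nhds_zero nhdsWithin_le_nhds).eventually hdiff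

theorem ContDiffAt.tendsto_smul_fderiv_smul_sphere {f : E → F} (hf : ContDiffAt ℝ 1 f 0)
    {l : Filter ℝ} (hl : l ≤ 𝓝 0) :
    Tendsto (fun p : ℝ × sphere (0 : E) 1 => p.1 • fderiv ℝ f (p.1 • (p.2 : E)) p.2)
      (l ×ˢ ⊤) (𝓝 0) := by
  have hD : Tendsto (fun p : ℝ × sphere (0 : E) 1 => ‖fderiv ℝ f (p.1 • (p.2 : E))‖)
      (l ×ˢ ⊤) (𝓝 ‖fderiv ℝ f 0‖) :=
    ((hf.continuousAt_fderiv one_ne_zero).tendsto.comp (tendsto_smul_sphere_nhds_zero hl)).norm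
  have hr : Tendsto (fun p : ℝ × sphere (0 : E) 1 => ‖p.1‖) (l ×ˢ ⊤) (𝓝 0) := by
    simpa using ((tendsto_fst (g := ⊤)).mono_right hl).norm
  refine squeeze_zero_norm (fun p => ?_) (by simpa using hr.mul hD)
  rw [norm_smul]
  refine mul_le_mul_of_nonneg_left ?_ (norm_nonneg _)
  simpa using (fderiv ℝ f (p.1 • (p.2 : E))).le_opNorm (p.2 : E)

theorem DifferentiableAt.hasDerivAt_apply_smul_const {f : E → F} {w : E} {r : ℝ}
    (hf : DifferentiableAt ℝ f (r • w)) :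
    HasDerivAt (fun s : ℝ => f (s • w)) (fderiv ℝ f (r • w) w) r := by
  simpa [Function.comp_def] using
    hf.hasFDerivAt.comp_hasDerivAt r ((hasDerivAt_id r).smul_const w)

end Ray

section BethePeierls

variable {E : Type*} [NormedAddCommGroup E] [NormedSpace ℝ E] {f ψ : E → ℂ} {c : ℂ}
  {w : E} {r : ℝ}

theorem apply_smul_eq_div_add (hψ : ∀ y : E, y ≠ 0 → ψ y = c / (‖y‖ : ℝ) + f y)
    (hw : ‖w‖ = 1) (hr : 0 < r) : ψ (r • w) = c / r + f (r • w) := by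
  have hw0 : w ≠ 0 := norm_ne_zero_iff.1 (by simp [hw])
  rw [hψ _ (smul_ne_zero hr.ne' hw0), norm_smul, hw, mul_one, Real.norm_of_nonneg hr.le]

theorem hasDerivAt_apply_smul (hψ : ∀ y : E, y ≠ 0 → ψ y = c / (‖y‖ : ℝ) + f y)
    (hw : ‖w‖ = 1) (hr : 0 < r) (hf : DifferentiableAt ℝ f (r • w)) :
    HasDerivAt (fun s : ℝ => ψ (s • w)) (-c / r ^ 2 + fderiv ℝ f (r • w) w) r := by
  have hinv : HasDerivAt (fun s : ℝ => c / (s : ℂ)) (-c / r ^ 2) r := by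
    have h := ((hasDerivAt_inv (ofReal_ne_zero.2 hr.ne')).const_mul c).comp_ofReal
    rw [show c * -((r : ℂ) ^ 2)⁻¹ = -c / r ^ 2 by ring] at h
    simpa only [div_eq_mul_inv] using h
  refine (hinv.add hf.hasDerivAt_apply_smul_const).congr_of_eventuallyEq ?_
  filter_upwards [eventually_gt_nhds hr] with s hs using apply_smul_eq_div_add hψ hw hs

theorem hasDerivAt_mul_apply_smul (hψ : ∀ y : E, y ≠ 0 → ψ y = c / (‖y‖ : ℝ) + f y)
    (hw : ‖w‖ = 1) (hr : 0 < r) (hf : DifferentiableAt ℝ f (r • w)) :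
    HasDerivAt (fun s : ℝ => (s : ℂ) * ψ (s • w)) (f (r • w) + r * fderiv ℝ f (r • w) w) r := by
  have hmul := (((hasDerivAt_id r).ofReal_comp).mul hf.hasDerivAt_apply_smul_const).const_add c
  simp only [id, ofReal_one, one_mul, Pi.mul_apply] at hmul
  refine hmul.congr_of_eventuallyEq ?_
  filter_upwards [eventually_gt_nhds hr] with s hs
  rw [apply_smul_eq_div_add hψ hw hs, mul_add, mul_div_cancel₀ _ (ofReal_ne_zero.2 hs.ne')]

theorem ContDiffAt.apply_zero_eq_neg_mul_of_bethePeierls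
    (hψ : ∀ y : E, y ≠ 0 → ψ y = c / (‖y‖ : ℝ) + f y) (hf : ContDiffAt ℝ 1 f 0) {α : ℝ}
    (ω : sphere (0 : E) 1)
    (hBP : Tendsto (fun r : ℝ => deriv (fun s : ℝ => (s : ℂ) * ψ (s • (ω : E))) r
      + (α : ℂ) * (r : ℂ) * ψ (r • (ω : E))) (𝓝[>] 0) (𝓝 0)) :
    f 0 = -α * c := by
  have hray : Tendsto (fun r : ℝ => (r, ω)) (𝓝[>] 0) (𝓝[>] 0 ×ˢ ⊤) :=
    tendsto_id.prodMk tendsto_top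
  have ha : Tendsto (fun r : ℝ => f (r • (ω : E))) (𝓝[>] 0) (𝓝 (f 0)) :=
    hf.continuousAt.tendsto.comp ((tendsto_smul_sphere_nhds_zero nhdsWithin_le_nhds).comp hray)
  have hb : Tendsto (fun r : ℝ => (r : ℂ) * fderiv ℝ f (r • (ω : E)) ω) (𝓝[>] 0) (𝓝 0) := by
    simpa only [real_smul, Function.comp_def] using
      (hf.tendsto_smul_fderiv_smul_sphere nhdsWithin_le_nhds).comp hray
  have hr : Tendsto (fun r : ℝ => (r : ℂ)) (𝓝[>] 0) (𝓝 0) :=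
    (continuous_ofReal.tendsto' 0 0 ofReal_zero).comp (tendsto_id.mono_right nhdsWithin_le_nhds)
  have hlim : Tendsto (fun r : ℝ => deriv (fun s : ℝ => (s : ℂ) * ψ (s • (ω : E))) r
      + (α : ℂ) * (r : ℂ) * ψ (r • (ω : E))) (𝓝[>] 0) (𝓝 (f 0 + α * c)) := by
    have h := (ha.add hb).add (((tendsto_const_nhds (x := c)).add (hr.mul ha)).const_mul (α : ℂ))
    rw [zero_mul, add_zero, add_zero] at h
    refine h.congr' ?_
    filter_upwards [hray.eventually hf.eventually_differentiableAt_smul_sphere]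
      with r ⟨hrpos, hdiff⟩
    have hω := norm_eq_of_mem_sphere ω
    have hr0 : (r : ℂ) ≠ 0 := ofReal_ne_zero.2 hrpos.ne'
    rw [(hasDerivAt_mul_apply_smul hψ hω hrpos hdiff).deriv, apply_smul_eq_div_add hψ hω hrpos]
    field_simp
  linear_combination tendsto_nhds_unique hlim hBP

theorem ContDiffAt.tendsto_sq_mul_im_conj_mul_deriv
    (hψ : ∀ y : E, y ≠ 0 → ψ y = c / (‖y‖ : ℝ) + f y) (hf : ContDiffAt ℝ 1 f 0)
    (hphase : (conj (f 0) * c).im = 0) :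
    Tendsto (fun p : ℝ × sphere (0 : E) 1 => p.1 ^ 2 *
      (conj (ψ (p.1 • (p.2 : E))) * deriv (fun s : ℝ => ψ (s • (p.2 : E))) p.1).im)
      (𝓝[>] 0 ×ˢ ⊤) (𝓝 0) := by
  have ha : Tendsto (fun p : ℝ × sphere (0 : E) 1 => conj (f (p.1 • (p.2 : E)))) (𝓝[>] 0 ×ˢ ⊤)
      (𝓝 (conj (f 0))) :=
    (continuous_conj.tendsto _).comp
      (hf.continuousAt.tendsto.comp (tendsto_smul_sphere_nhds_zero nhdsWithin_le_nhds))
  have hb : Tendsto (fun p : ℝ × sphere (0 : E) 1 => (p.1 : ℂ) * fderiv ℝ f (p.1 • (p.2 : E)) p.2)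
      (𝓝[>] 0 ×ˢ ⊤) (𝓝 0) := by
    simpa only [real_smul] using hf.tendsto_smul_fderiv_smul_sphere nhdsWithin_le_nhds
  have hr : Tendsto (fun p : ℝ × sphere (0 : E) 1 => (p.1 : ℂ)) (𝓝[>] 0 ×ˢ ⊤) (𝓝 0) :=
    (continuous_ofReal.tendsto' 0 0 ofReal_zero).comp
      ((tendsto_fst (g := ⊤)).mono_right nhdsWithin_le_nhds)
  have hlim := (continuous_im.tendsto _).comp
    (((tendsto_const_nhds (x := conj c)).mul hb).sub (ha.mul_const c) |>.add ((hr.mul ha).mul hb))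
  rw [mul_zero, zero_mul, zero_mul, add_zero, zero_sub, Function.comp_def, neg_im, hphase,
    neg_zero] at hlim
  refine hlim.congr' ?_
  filter_upwards [hf.eventually_differentiableAt_smul_sphere] with p ⟨hp, hdiff⟩
  have hω := norm_eq_of_mem_sphere p.2
  rw [(hasDerivAt_apply_smul hψ hω hp hdiff).deriv, apply_smul_eq_div_add hψ hω hp,
    sq_mul_im_conj_div_add_mul_neg_div_add _ _ _ hp.ne']

end BethePeierls

theorem bethe_peierls_zero_current
    (ℏ m α : ℝ) (c : ℂ)
    (f ψ : EuclideanSpace ℝ (Fin 3) → ℂ)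
    (U : Set (EuclideanSpace ℝ (Fin 3))) (hU : U ∈ nhds (0 : EuclideanSpace ℝ (Fin 3)))
    (hf : ContDiffOn ℝ 1 f U)
    (hψdef : ∀ y : EuclideanSpace ℝ (Fin 3), y ≠ 0 → ψ y = c / (‖y‖ : ℝ) + f y)
    -- Bethe–Peierls boundary condition: for every ω ∈ S²,
    -- lim_{r→0} [∂_r (r ψ(rω)) + α r ψ(rω)] = 0
    (hBP : ∀ ω : sphere (0 : EuclideanSpace ℝ (Fin 3)) 1,
      Filter.Tendsto
        (fun r : ℝ =>
          deriv (fun s : ℝ => (s : ℂ) * ψ (s • (ω : EuclideanSpace ℝ (Fin 3)))) r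
            + (α : ℂ) * (r : ℂ) * ψ (r • (ω : EuclideanSpace ℝ (Fin 3))))
        (nhdsWithin 0 (Set.Ioi 0)) (nhds 0)) :
    Filter.Tendsto
      (fun r : ℝ =>
        ∫ ω : sphere (0 : EuclideanSpace ℝ (Fin 3)) 1,
          r ^ 2 *
            ((ℏ / m) *
              ((starRingEnd ℂ) (ψ (r • (ω : EuclideanSpace ℝ (Fin 3)))) *
                deriv (fun s : ℝ => ψ (s • (ω : EuclideanSpace ℝ (Fin 3)))) r).im)
          ∂((volume : Measure (EuclideanSpace ℝ (Fin 3))).toSphere))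
      (nhdsWithin 0 (Set.Ioi 0)) (nhds 0) := by
  have hf1 : ContDiffAt ℝ 1 f 0 := hf.contDiffAt hU
  obtain ⟨ω₀⟩ : Nonempty (sphere (0 : EuclideanSpace ℝ (Fin 3)) 1) :=
    (NormedSpace.sphere_nonempty.2 zero_le_one).to_subtype
  have hphase : (conj (f 0) * c).im = 0 := by
    rw [hf1.apply_zero_eq_neg_mul_of_bethePeierls hψdef ω₀ (hBP ω₀)]
    rw [← ofReal_neg, map_mul, conj_ofReal, mul_assoc, ← normSq_eq_conj_mul_self, ← ofReal_mul,
      ofReal_im]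
  have hcurrent := (hf1.tendsto_sq_mul_im_conj_mul_deriv hψdef hphase).const_mul (ℏ / m)
  rw [mul_zero] at hcurrent
  exact tendsto_integral_zero_of_tendsto_uncurry (hcurrent.congr fun _ => mul_left_comm _ _ _)
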